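/- arXiv:1503.03980 — 2 statements merged into one kernel-verified Lean document; each statement's English description precedes it below -/
import Mathlib

section
/- Let 0 < x₁ < x₂ < 1 and let F : [0,1]² → ℝ be continuous such that the mixed second partial derivative ∂²F/∂x∂y exists and is strictly positive at every point of (0,x₁)×(0,1), strictly negative at every point of (x₁,x₂)×(0,1), and strictly positive at every point of (x₂,1)×(0,1). Let μ* be a doubly stochastic measure on [0,1]² maximizing ∫ F dμ over all doubly stochastic measures, and let C(x,y) = μ*([0,x]×[0,y]), h₁(y) = C(x₁,y), h₂(y) = C(x₂,y). Then for all (x,y) ∈ [0,1]²: C(x,y) = min(x, h₁(y)) if x ∈ [0,x₁]; C(x,y) = max(x + h₂(y) − x₂, h₁(y)) if x ∈ [x₁,x₂]; and C(x,y) = min(x − x₂ + h₂(y), y) if x ∈ [x₂,1]. -/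
open MeasureTheory Set

/-- A doubly stochastic measure on `[0,1]²`: a Borel probability measure whose
marginals on both coordinates are Lebesgue measure on `[0,1]`. -/
def IsDoublyStochastic (μ : Measure (ℝ × ℝ)) : Prop :=
  IsProbabilityMeasure μ ∧
  (∀ B : Set ℝ, MeasurableSet B → B ⊆ Icc 0 1 → μ (B ×ˢ Icc (0:ℝ) 1) = volume B) ∧
  (∀ B : Set ℝ, MeasurableSet B → B ⊆ Icc 0 1 → μ (Icc (0:ℝ) 1 ×ˢ B) = volume B)

/-- The copula (distribution function) of a measure on `[0,1]²`. -/
noncomputable def copulaOf (μ : Measure (ℝ × ℝ)) (x y : ℝ) : ℝ :=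
  (μ (Icc 0 x ×ˢ Icc 0 y)).toReal

/-!
Suppose the mixed partial of `F` is positive on a strip `(a, b) × (0, 1)`, so that
`F (s, v) + F (u, t) < F (s, t) + F (u, v)` for `s < u` and `t < v` in it. If both rectangles
`(a, x) × (y, 1)` and `(x, b) × (0, y)` carried mass under the maximizer, pairing points of the
first with points of the second and exchanging their second coordinates would give a doubly
stochastic measure with a strictly larger integral. So one of them is null; their masses are
`x - a - C x y + C a y` and `C b y - C x y`, whence `C x y = min (x - a + C a y) (C b y)`.
Where the mixed partial is negative the mirror-image rectangles give the `max` formula.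
-/

theorem add_lt_add_of_deriv_deriv_pos {F : ℝ × ℝ → ℝ} {s u t v : ℝ} (hsu : s < u) (htv : t < v)
    (hF : ∀ x ∈ Icc s u, ∀ y ∈ Icc t v,
      DifferentiableAt ℝ (fun x' => F (x', y)) x ∧
      DifferentiableAt ℝ (fun y' => deriv (fun x' => F (x', y')) x) y ∧
      0 < deriv (fun y' => deriv (fun x' => F (x', y')) x) y) :
    F (s, v) + F (u, t) < F (s, t) + F (u, v) := by
  have hderiv : ∀ x ∈ Icc s u, deriv (fun x' => F (x', t)) x < deriv (fun x' => F (x', v)) x :=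
    fun x hx => strictMonoOn_of_deriv_pos (convex_Icc t v)
      (fun y hy => (hF x hx y hy).2.1.continuousAt.continuousWithinAt)
      (fun y hy => (hF x hx y (interior_subset hy)).2.2)
      (left_mem_Icc.2 htv.le) (right_mem_Icc.2 htv.le) htv
  have hdiff : ∀ x ∈ Icc s u, HasDerivAt (fun x' => F (x', v) - F (x', t))
      (deriv (fun x' => F (x', v)) x - deriv (fun x' => F (x', t)) x) x := fun x hx =>
    (hF x hx v (right_mem_Icc.2 htv.le)).1.hasDerivAt.sub
      (hF x hx t (left_mem_Icc.2 htv.le)).1.hasDerivAt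
  have hmono : StrictMonoOn (fun x => F (x, v) - F (x, t)) (Icc s u) :=
    strictMonoOn_of_deriv_pos (convex_Icc s u)
      (fun x hx => (hdiff x hx).continuousAt.continuousWithinAt)
      (fun x hx => by
        rw [(hdiff x (interior_subset hx)).deriv, sub_pos]
        exact hderiv x (interior_subset hx))
  have := hmono (left_mem_Icc.2 hsu.le) (right_mem_Icc.2 hsu.le) hsu
  simp only at this
  linarith

theorem add_lt_add_of_deriv_deriv_neg {F : ℝ × ℝ → ℝ} {s u t v : ℝ} (hsu : s < u) (htv : t < v)
    (hF : ∀ x ∈ Icc s u, ∀ y ∈ Icc t v,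
      DifferentiableAt ℝ (fun x' => F (x', y)) x ∧
      DifferentiableAt ℝ (fun y' => deriv (fun x' => F (x', y')) x) y ∧
      deriv (fun y' => deriv (fun x' => F (x', y')) x) y < 0) :
    F (s, t) + F (u, v) < F (s, v) + F (u, t) := by
  have := add_lt_add_of_deriv_deriv_pos (F := fun p => -F p) hsu htv fun x hx y hy => by
    obtain ⟨h1, h2, h3⟩ := hF x hx y hy
    simp only [deriv.fun_neg]
    exact ⟨h1.neg, h2.neg, neg_pos.2 h3⟩
  linarith

theorem MeasureTheory.integral_lt_integral_of_ae_lt {α : Type*} [MeasurableSpace α]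
    {μ : Measure α} [NeZero μ] {f g : α → ℝ} (hf : Integrable f μ) (hg : Integrable g μ)
    (hfg : ∀ᵐ x ∂μ, f x < g x) : ∫ x, f x ∂μ < ∫ x, g x ∂μ := by
  have hle : f ≤ᵐ[μ] g := hfg.mono fun _ => le_of_lt
  refine (integral_mono_ae hf hg hle).lt_of_ne fun heq => ?_
  obtain ⟨x, hx, hx'⟩ := (((integral_eq_iff_of_ae_le hf hg hle).1 heq).and hfg).exists
  exact hx'.ne hx

namespace MeasureTheory.Measure

variable {α β : Type*} [MeasurableSpace α] [MeasurableSpace β] {μ : Measure (α × β)}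
  {A B : Set (α × β)}

/-- The fractions `μ B` of the mass on `A` and `μ A` of the mass on `B` are taken away and put
back by joining independent points `p ∈ A`, `q ∈ B` into `(p.1, q.2)` and `(q.1, p.2)`. -/
noncomputable def exchange (μ : Measure (α × β)) (A B : Set (α × β)) : Measure (α × β) :=
  μ.restrict (A ∪ B)ᶜ + (1 - μ B) • μ.restrict A + (1 - μ A) • μ.restrict B +
    ((μ.restrict A).prod (μ.restrict B)).map (fun z => (z.1.1, z.2.2)) +
    ((μ.restrict A).prod (μ.restrict B)).map (fun z => (z.2.1, z.1.2))

theorem exchange_add_map_fst_add_map_snd [IsProbabilityMeasure μ] (hA : MeasurableSet A)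
    (hB : MeasurableSet B) (hAB : Disjoint A B) :
    μ.exchange A B + (((μ.restrict A).prod (μ.restrict B)).map Prod.fst +
        ((μ.restrict A).prod (μ.restrict B)).map Prod.snd) =
      μ + (((μ.restrict A).prod (μ.restrict B)).map (fun z => (z.1.1, z.2.2)) +
        ((μ.restrict A).prod (μ.restrict B)).map (fun z => (z.2.1, z.1.2))) := by
  rw [map_fst_prod, map_snd_prod, restrict_apply_univ, restrict_apply_univ, exchange]
  calc _ = μ.restrict (A ∪ B)ᶜ + (1 - μ B + μ B) • μ.restrict A +
        (1 - μ A + μ A) • μ.restrict B +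
        ((μ.restrict A).prod (μ.restrict B)).map (fun z => (z.1.1, z.2.2)) +
        ((μ.restrict A).prod (μ.restrict B)).map (fun z => (z.2.1, z.1.2)) := by
        rw [add_smul, add_smul]; abel
    _ = _ := by
      rw [tsub_add_cancel_of_le prob_le_one, tsub_add_cancel_of_le prob_le_one, one_smul,
        one_smul, add_assoc _ (μ.restrict A), ← restrict_union hAB hB, add_comm _ (μ.restrict _),
        restrict_add_restrict_compl (hA.union hB), add_assoc]

theorem map_exchange {γ : Type*} [MeasurableSpace γ] [IsProbabilityMeasure μ]
    (hA : MeasurableSet A) (hB : MeasurableSet B) (hAB : Disjoint A B) {f : α × β → γ}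
    (hf : Measurable f)
    (hfK : ((μ.restrict A).prod (μ.restrict B)).map (f ∘ fun z => (z.1.1, z.2.2)) +
        ((μ.restrict A).prod (μ.restrict B)).map (f ∘ fun z => (z.2.1, z.1.2)) =
      ((μ.restrict A).prod (μ.restrict B)).map (f ∘ Prod.fst) +
        ((μ.restrict A).prod (μ.restrict B)).map (f ∘ Prod.snd)) :
    (μ.exchange A B).map f = μ.map f := by
  have h := congrArg (map f) (exchange_add_map_fst_add_map_snd (μ := μ) hA hB hAB)
  rw [Measure.map_add _ _ hf, Measure.map_add _ _ hf, Measure.map_add _ _ hf,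
    Measure.map_add _ _ hf, map_map hf measurable_fst, map_map hf measurable_snd,
    map_map hf (by fun_prop), map_map hf (by fun_prop), hfK] at h
  ext s
  have := congrArg (· s) h
  rw [add_apply, add_apply (map f μ)] at this
  exact (ENNReal.add_left_inj (measure_ne_top _ s)).1 this

theorem map_fst_exchange [IsProbabilityMeasure μ] (hA : MeasurableSet A) (hB : MeasurableSet B)
    (hAB : Disjoint A B) : (μ.exchange A B).map Prod.fst = μ.map Prod.fst :=
  map_exchange hA hB hAB measurable_fst rfl

theorem map_snd_exchange [IsProbabilityMeasure μ] (hA : MeasurableSet A) (hB : MeasurableSet B)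
    (hAB : Disjoint A B) : (μ.exchange A B).map Prod.snd = μ.map Prod.snd :=
  map_exchange hA hB hAB measurable_snd (add_comm _ _)

theorem isProbabilityMeasure_exchange [IsProbabilityMeasure μ] (hA : MeasurableSet A)
    (hB : MeasurableSet B) (hAB : Disjoint A B) : IsProbabilityMeasure (μ.exchange A B) := by
  have h := congrArg (· univ) (map_fst_exchange (μ := μ) hA hB hAB)
  simp only [map_apply measurable_fst MeasurableSet.univ, preimage_univ, measure_univ] at h
  exact ⟨h⟩

theorem integral_lt_integral_exchange [IsProbabilityMeasure μ] (hA : MeasurableSet A)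
    (hB : MeasurableSet B) (hAB : Disjoint A B) (hμA : μ A ≠ 0) (hμB : μ B ≠ 0)
    {G : α × β → ℝ} (hG : Measurable G) {M : ℝ} (hGM : ∀ p, ‖G p‖ ≤ M)
    (hgain : ∀ p ∈ A, ∀ q ∈ B, G p + G q < G (p.1, q.2) + G (q.1, p.2)) :
    ∫ p, G p ∂μ < ∫ p, G p ∂μ.exchange A B := by
  have := isProbabilityMeasure_exchange (μ := μ) hA hB hAB
  have hint : ∀ (ν : Measure (α × β)) [IsFiniteMeasure ν], Integrable G ν :=
    fun ν _ => .of_bound hG.aestronglyMeasurable M (ae_of_all _ hGM)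
  have hsum := congrArg (fun ν => ∫ p, G p ∂ν) (exchange_add_map_fst_add_map_snd (μ := μ) hA hB hAB)
  simp only [integral_add_measure (hint _) (hint _)] at hsum
  rw [integral_map (by fun_prop) hG.aestronglyMeasurable,
    integral_map (by fun_prop) hG.aestronglyMeasurable,
    integral_map (by fun_prop) hG.aestronglyMeasurable,
    integral_map (by fun_prop) hG.aestronglyMeasurable] at hsum
  set K := (μ.restrict A).prod (μ.restrict B) with hK
  have hintK : ∀ {f : (α × β) × (α × β) → α × β}, Measurable f → Integrable (fun z => G (f z)) K :=
    fun hf => .of_bound (hG.comp hf).aestronglyMeasurable M (ae_of_all _ fun _ => hGM _)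
  have hlt : ∫ z, G z.1 + G z.2 ∂K < ∫ z, G (z.1.1, z.2.2) + G (z.2.1, z.1.2) ∂K := by
    have : NeZero K := ⟨by
      rw [← measure_univ_ne_zero, hK, ← univ_prod_univ, prod_prod, restrict_apply_univ,
        restrict_apply_univ]
      exact mul_ne_zero hμA hμB⟩
    refine integral_lt_integral_of_ae_lt ((hintK measurable_fst).add (hintK measurable_snd))
      ((hintK (by fun_prop)).add (hintK (by fun_prop))) ?_
    rw [hK, prod_restrict]
    filter_upwards [ae_restrict_mem (hA.prod hB)] with z hz using hgain _ hz.1 _ hz.2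
  rw [integral_add (hintK measurable_fst) (hintK measurable_snd),
    integral_add (hintK (by fun_prop)) (hintK (by fun_prop))] at hlt
  linarith

end MeasureTheory.Measure

theorem IsDoublyStochastic.ae_mem_square {μ : Measure (ℝ × ℝ)} (hμ : IsDoublyStochastic μ) :
    ∀ᵐ p ∂μ, p ∈ Icc (0:ℝ) 1 ×ˢ Icc (0:ℝ) 1 := by
  have := hμ.1
  rw [ae_iff, ← compl_def, prob_compl_eq_zero_iff (measurableSet_Icc.prod measurableSet_Icc),
    hμ.2.1 _ measurableSet_Icc subset_rfl, Real.volume_Icc, sub_zero, ENNReal.ofReal_one]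

theorem isDoublyStochastic_iff_map {μ : Measure (ℝ × ℝ)} :
    IsDoublyStochastic μ ↔ μ.map Prod.fst = volume.restrict (Icc 0 1) ∧
      μ.map Prod.snd = volume.restrict (Icc 0 1) := by
  constructor
  · intro hμ
    refine ⟨Measure.ext fun B hB => ?_, Measure.ext fun B hB => ?_⟩
    · rw [Measure.map_apply measurable_fst hB, Measure.restrict_apply hB,
        ← measure_inter_conull hμ.ae_mem_square,
        ← hμ.2.1 _ (hB.inter measurableSet_Icc) inter_subset_right]
      congr 1; ext p; simp only [mem_inter_iff, mem_preimage, mem_prod, mem_ofPred_eq]; tauto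
    · rw [Measure.map_apply measurable_snd hB, Measure.restrict_apply hB,
        ← measure_inter_conull hμ.ae_mem_square,
        ← hμ.2.2 _ (hB.inter measurableSet_Icc) inter_subset_right]
      congr 1; ext p; simp only [mem_inter_iff, mem_preimage, mem_prod, mem_ofPred_eq]; tauto
  · rintro ⟨h1, h2⟩
    have hmarg : ∀ {f : ℝ × ℝ → ℝ}, Measurable f → μ.map f = volume.restrict (Icc 0 1) →
        ∀ B, MeasurableSet B → B ⊆ Icc 0 1 → μ (f ⁻¹' B) = volume B := fun hf h B hB hBI => by
      rw [← Measure.map_apply hf hB, h, Measure.restrict_apply hB, inter_eq_left.2 hBI]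
    have hnull : ∀ {f : ℝ × ℝ → ℝ}, Measurable f → μ.map f = volume.restrict (Icc 0 1) →
        μ (f ⁻¹' Icc 0 1)ᶜ = 0 := fun hf h => by
      rw [← preimage_compl, ← Measure.map_apply hf measurableSet_Icc.compl, h,
        Measure.restrict_apply' measurableSet_Icc, compl_inter_self, measure_empty]
    refine ⟨⟨?_⟩, fun B hB hBI => ?_, fun B hB hBI => ?_⟩
    · rw [← preimage_univ (f := Prod.fst), ← Measure.map_apply measurable_fst MeasurableSet.univ,
        h1, Measure.restrict_apply_univ, Real.volume_Icc, sub_zero, ENNReal.ofReal_one]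
    · rw [prod_eq, measure_inter_conull (hnull measurable_snd h2),
        hmarg measurable_fst h1 B hB hBI]
    · rw [prod_eq, inter_comm, measure_inter_conull (hnull measurable_fst h1),
        hmarg measurable_snd h2 B hB hBI]

namespace IsDoublyStochastic

variable {μ : Measure (ℝ × ℝ)}

theorem Ioo_prod_Ioo_ae_eq (hμ : IsDoublyStochastic μ) (p q s t : ℝ) :
    Ioo p q ×ˢ Ioo s t =ᵐ[μ] Ioc p q ×ˢ Ioc s t := by
  obtain ⟨h1, h2⟩ := isDoublyStochastic_iff_map.1 hμ
  have hfst : Prod.fst ⁻¹' Ioo p q =ᵐ[μ] Prod.fst ⁻¹' Ioc p q :=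
    (measurable_fst.quasiMeasurePreserving μ).preimage_ae_eq (h1 ▸ Ioo_ae_eq_Ioc)
  have hsnd : Prod.snd ⁻¹' Ioo s t =ᵐ[μ] Prod.snd ⁻¹' Ioc s t :=
    (measurable_snd.quasiMeasurePreserving μ).preimage_ae_eq (h2 ▸ Ioo_ae_eq_Ioc)
  simpa only [prod_eq] using hfst.inter hsnd

theorem copulaOf_zero_left (hμ : IsDoublyStochastic μ) (y : ℝ) : copulaOf μ 0 y = 0 := by
  rw [copulaOf, Icc_self, ENNReal.toReal_eq_zero_iff]
  refine Or.inl (measure_mono_null (prod_subset_preimage_fst _ _) ?_)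
  rw [← Measure.map_apply measurable_fst (measurableSet_singleton 0),
    (isDoublyStochastic_iff_map.1 hμ).1, measure_singleton]

theorem copulaOf_zero_right (hμ : IsDoublyStochastic μ) (x : ℝ) : copulaOf μ x 0 = 0 := by
  rw [copulaOf, Icc_self, ENNReal.toReal_eq_zero_iff]
  refine Or.inl (measure_mono_null (prod_subset_preimage_snd _ _) ?_)
  rw [← Measure.map_apply measurable_snd (measurableSet_singleton 0),
    (isDoublyStochastic_iff_map.1 hμ).2, measure_singleton]

theorem copulaOf_one_left (hμ : IsDoublyStochastic μ) {y : ℝ} (hy : y ∈ Icc (0:ℝ) 1) :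
    copulaOf μ 1 y = y := by
  rw [copulaOf, hμ.2.2 _ measurableSet_Icc (Icc_subset_Icc_right hy.2), Real.volume_Icc,
    sub_zero, ENNReal.toReal_ofReal hy.1]

theorem copulaOf_one_right (hμ : IsDoublyStochastic μ) {x : ℝ} (hx : x ∈ Icc (0:ℝ) 1) :
    copulaOf μ x 1 = x := by
  rw [copulaOf, hμ.2.1 _ measurableSet_Icc (Icc_subset_Icc_right hx.2), Real.volume_Icc,
    sub_zero, ENNReal.toReal_ofReal hx.1]

theorem toReal_measure_Ioo_prod_Ioo (hμ : IsDoublyStochastic μ) {p q s t : ℝ} (hp : 0 ≤ p)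
    (hpq : p ≤ q) (hs : 0 ≤ s) (hst : s ≤ t) :
    (μ (Ioo p q ×ˢ Ioo s t)).toReal =
      copulaOf μ q t - copulaOf μ p t - copulaOf μ q s + copulaOf μ p s := by
  have := hμ.1
  have hx : ∀ T, MeasurableSet T → μ (Icc 0 q ×ˢ T) = μ (Icc 0 p ×ˢ T) + μ (Ioc p q ×ˢ T) :=
    fun T hT => by
      rw [← Icc_union_Ioc_eq_Icc hp hpq, union_prod, measure_union
        (((Iic_disjoint_Ioi le_rfl).mono Icc_subset_Iic_self Ioc_subset_Ioi_self).set_prod_left _ _)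
        (measurableSet_Ioc.prod hT)]
  have hy : μ (Ioc p q ×ˢ Icc 0 t) = μ (Ioc p q ×ˢ Icc 0 s) + μ (Ioc p q ×ˢ Ioc s t) := by
    rw [← Icc_union_Ioc_eq_Icc hs hst, prod_union, measure_union
      (((Iic_disjoint_Ioi le_rfl).mono Icc_subset_Iic_self Ioc_subset_Ioi_self).set_prod_right _ _)
      (measurableSet_Ioc.prod measurableSet_Ioc)]
  rw [copulaOf, copulaOf, copulaOf, copulaOf, measure_congr (hμ.Ioo_prod_Ioo_ae_eq p q s t),
    hx _ measurableSet_Icc, hx _ measurableSet_Icc, hy]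
  simp only [ENNReal.toReal_add, measure_ne_top, ENNReal.add_ne_top, ne_eq, not_false_eq_true,
    and_self]
  ring

theorem copulaOf_eq_min (hμ : IsDoublyStochastic μ) {a b x y : ℝ} (ha : 0 ≤ a)
    (hx : x ∈ Icc a b) (hb : b ≤ 1) (hy : y ∈ Icc (0:ℝ) 1)
    (h : μ (Ioo a x ×ˢ Ioo y 1) = 0 ∨ μ (Ioo x b ×ˢ Ioo 0 y) = 0) :
    copulaOf μ x y = min (x - a + copulaOf μ a y) (copulaOf μ b y) := by
  have hA := hμ.toReal_measure_Ioo_prod_Ioo ha hx.1 hy.1 hy.2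
  have hB := hμ.toReal_measure_Ioo_prod_Ioo (ha.trans hx.1) hx.2 le_rfl hy.1
  rw [hμ.copulaOf_one_right ⟨ha.trans hx.1, hx.2.trans hb⟩,
    hμ.copulaOf_one_right ⟨ha, hx.1.trans (hx.2.trans hb)⟩] at hA
  rw [hμ.copulaOf_zero_right, hμ.copulaOf_zero_right] at hB
  have hA0 := hA ▸ ENNReal.toReal_nonneg
  have hB0 := hB ▸ ENNReal.toReal_nonneg
  rcases h with h | h
  · rw [h, ENNReal.toReal_zero] at hA
    rw [min_eq_left (by linarith)]; linarith
  · rw [h, ENNReal.toReal_zero] at hB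
    rw [min_eq_right (by linarith)]; linarith

theorem copulaOf_eq_max (hμ : IsDoublyStochastic μ) {a b x y : ℝ} (ha : 0 ≤ a)
    (hx : x ∈ Icc a b) (hb : b ≤ 1) (hy : y ∈ Icc (0:ℝ) 1)
    (h : μ (Ioo x b ×ˢ Ioo y 1) = 0 ∨ μ (Ioo a x ×ˢ Ioo 0 y) = 0) :
    copulaOf μ x y = max (x + copulaOf μ b y - b) (copulaOf μ a y) := by
  have hA := hμ.toReal_measure_Ioo_prod_Ioo (ha.trans hx.1) hx.2 hy.1 hy.2
  have hB := hμ.toReal_measure_Ioo_prod_Ioo ha hx.1 le_rfl hy.1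
  rw [hμ.copulaOf_one_right ⟨ha.trans (hx.1.trans hx.2), hb⟩,
    hμ.copulaOf_one_right ⟨ha.trans hx.1, hx.2.trans hb⟩] at hA
  rw [hμ.copulaOf_zero_right, hμ.copulaOf_zero_right] at hB
  have hA0 := hA ▸ ENNReal.toReal_nonneg
  have hB0 := hB ▸ ENNReal.toReal_nonneg
  rcases h with h | h
  · rw [h, ENNReal.toReal_zero] at hA
    rw [max_eq_left (by linarith)]; linarith
  · rw [h, ENNReal.toReal_zero] at hB
    rw [max_eq_right (by linarith)]; linarith

theorem exchange (hμ : IsDoublyStochastic μ) {A B : Set (ℝ × ℝ)} (hA : MeasurableSet A)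
    (hB : MeasurableSet B) (hAB : Disjoint A B) : IsDoublyStochastic (μ.exchange A B) := by
  have := hμ.1
  rw [isDoublyStochastic_iff_map] at hμ ⊢
  rwa [Measure.map_fst_exchange hA hB hAB, Measure.map_snd_exchange hA hB hAB]

theorem measure_eq_zero_or_of_forall_add_lt (hμ : IsDoublyStochastic μ) {F : ℝ × ℝ → ℝ}
    (hF : ContinuousOn F (Icc (0:ℝ) 1 ×ˢ Icc (0:ℝ) 1))
    (hmax : ∀ ν : Measure (ℝ × ℝ), IsDoublyStochastic ν → ∫ p, F p ∂ν ≤ ∫ p, F p ∂μ)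
    {A B : Set (ℝ × ℝ)} (hA : MeasurableSet A) (hB : MeasurableSet B) (hAB : Disjoint A B)
    (hAQ : A ⊆ Icc (0:ℝ) 1 ×ˢ Icc (0:ℝ) 1) (hBQ : B ⊆ Icc (0:ℝ) 1 ×ˢ Icc (0:ℝ) 1)
    (hgain : ∀ p ∈ A, ∀ q ∈ B, F p + F q < F (p.1, q.2) + F (q.1, p.2)) :
    μ A = 0 ∨ μ B = 0 := by
  by_contra! h
  have := hμ.1
  -- `F` is arbitrary off the square: compose it with the retraction `r` onto the square.
  let r : ℝ × ℝ → ℝ × ℝ := fun p => (projIcc 0 1 zero_le_one p.1, projIcc 0 1 zero_le_one p.2)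
  have hrQ : ∀ p, r p ∈ Icc (0:ℝ) 1 ×ˢ Icc (0:ℝ) 1 := fun p => ⟨Subtype.prop _, Subtype.prop _⟩
  have hr : ∀ p ∈ Icc (0:ℝ) 1 ×ˢ Icc (0:ℝ) 1, r p = p := fun p hp => by
    simp only [r, projIcc_of_mem zero_le_one hp.1, projIcc_of_mem zero_le_one hp.2]
  have hG : Continuous (F ∘ r) := hF.comp_continuous (by fun_prop) hrQ
  obtain ⟨M, hM⟩ := (isCompact_Icc.prod isCompact_Icc).exists_bound_of_continuousOn hF
  have hFG : ∀ ν, IsDoublyStochastic ν → ∫ p, F p ∂ν = ∫ p, (F ∘ r) p ∂ν := fun ν hν =>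
    integral_congr_ae (hν.ae_mem_square.mono fun p hp => by simp only [Function.comp, hr p hp])
  have hlt := Measure.integral_lt_integral_exchange hA hB hAB h.1 h.2 hG.measurable
    (fun p => hM _ (hrQ p)) fun p hp q hq => by
      simpa only [Function.comp, hr _ (hAQ hp), hr _ (hBQ hq),
        hr (p.1, q.2) ⟨(hAQ hp).1, (hBQ hq).2⟩, hr (q.1, p.2) ⟨(hBQ hq).1, (hAQ hp).2⟩]
        using hgain p hp q hq
  rw [← hFG _ hμ, ← hFG _ (hμ.exchange hA hB hAB)] at hlt
  exact (hmax _ (hμ.exchange hA hB hAB)).not_gt hlt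

theorem measure_eq_zero_or_of_deriv_deriv_pos (hμ : IsDoublyStochastic μ) {F : ℝ × ℝ → ℝ}
    (hF : ContinuousOn F (Icc (0:ℝ) 1 ×ˢ Icc (0:ℝ) 1))
    (hmax : ∀ ν : Measure (ℝ × ℝ), IsDoublyStochastic ν → ∫ p, F p ∂ν ≤ ∫ p, F p ∂μ)
    {a b x y : ℝ} (ha : 0 ≤ a) (hx : x ∈ Icc a b) (hb : b ≤ 1) (hy : y ∈ Icc (0:ℝ) 1)
    (hpos : ∀ x y, x ∈ Ioo a b → y ∈ Ioo (0:ℝ) 1 →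
      DifferentiableAt ℝ (fun x' => F (x', y)) x ∧
      DifferentiableAt ℝ (fun y' => deriv (fun x' => F (x', y')) x) y ∧
      0 < deriv (fun y' => deriv (fun x' => F (x', y')) x) y) :
    μ (Ioo a x ×ˢ Ioo y 1) = 0 ∨ μ (Ioo x b ×ˢ Ioo 0 y) = 0 := by
  refine hμ.measure_eq_zero_or_of_forall_add_lt hF hmax (measurableSet_Ioo.prod measurableSet_Ioo)
    (measurableSet_Ioo.prod measurableSet_Ioo)
    (Disjoint.set_prod_left (disjoint_left.2 fun s h h' => (h.2.trans h'.1).false) _ _)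
    (prod_mono (Ioo_subset_Icc_self.trans (Icc_subset_Icc ha (hx.2.trans hb)))
      (Ioo_subset_Icc_self.trans (Icc_subset_Icc hy.1 le_rfl)))
    (prod_mono (Ioo_subset_Icc_self.trans (Icc_subset_Icc (ha.trans hx.1) hb))
      (Ioo_subset_Icc_self.trans (Icc_subset_Icc le_rfl hy.2))) ?_
  rintro ⟨s, v⟩ ⟨hs, hv⟩ ⟨u, t⟩ ⟨hu, ht⟩
  exact add_lt_add_of_deriv_deriv_pos (hs.2.trans hu.1) (ht.2.trans hv.1) fun x' hx' y' hy' =>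
    hpos x' y' ⟨hs.1.trans_le hx'.1, hx'.2.trans_lt hu.2⟩ ⟨ht.1.trans_le hy'.1, hy'.2.trans_lt hv.2⟩

theorem measure_eq_zero_or_of_deriv_deriv_neg (hμ : IsDoublyStochastic μ) {F : ℝ × ℝ → ℝ}
    (hF : ContinuousOn F (Icc (0:ℝ) 1 ×ˢ Icc (0:ℝ) 1))
    (hmax : ∀ ν : Measure (ℝ × ℝ), IsDoublyStochastic ν → ∫ p, F p ∂ν ≤ ∫ p, F p ∂μ)
    {a b x y : ℝ} (ha : 0 ≤ a) (hx : x ∈ Icc a b) (hb : b ≤ 1) (hy : y ∈ Icc (0:ℝ) 1)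
    (hneg : ∀ x y, x ∈ Ioo a b → y ∈ Ioo (0:ℝ) 1 →
      DifferentiableAt ℝ (fun x' => F (x', y)) x ∧
      DifferentiableAt ℝ (fun y' => deriv (fun x' => F (x', y')) x) y ∧
      deriv (fun y' => deriv (fun x' => F (x', y')) x) y < 0) :
    μ (Ioo x b ×ˢ Ioo y 1) = 0 ∨ μ (Ioo a x ×ˢ Ioo 0 y) = 0 := by
  refine hμ.measure_eq_zero_or_of_forall_add_lt hF hmax (measurableSet_Ioo.prod measurableSet_Ioo)
    (measurableSet_Ioo.prod measurableSet_Ioo)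
    (Disjoint.set_prod_left (disjoint_left.2 fun s h h' => (h'.2.trans h.1).false) _ _)
    (prod_mono (Ioo_subset_Icc_self.trans (Icc_subset_Icc (ha.trans hx.1) hb))
      (Ioo_subset_Icc_self.trans (Icc_subset_Icc hy.1 le_rfl)))
    (prod_mono (Ioo_subset_Icc_self.trans (Icc_subset_Icc ha (hx.2.trans hb)))
      (Ioo_subset_Icc_self.trans (Icc_subset_Icc le_rfl hy.2))) ?_
  rintro ⟨s, v⟩ ⟨hs, hv⟩ ⟨u, t⟩ ⟨hu, ht⟩
  have := add_lt_add_of_deriv_deriv_neg (hu.2.trans hs.1) (ht.2.trans hv.1) fun x' hx' y' hy' =>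
    hneg x' y' ⟨hu.1.trans_le hx'.1, hx'.2.trans_lt hs.2⟩ ⟨ht.1.trans_le hy'.1, hy'.2.trans_lt hv.2⟩
  dsimp only
  linarith

end IsDoublyStochastic

theorem stmt2 (x₁ x₂ : ℝ) (hx₁ : 0 < x₁) (hx₁₂ : x₁ < x₂) (hx₂ : x₂ < 1)
    (F : ℝ × ℝ → ℝ)
    (hFcont : ContinuousOn F (Icc (0:ℝ) 1 ×ˢ Icc (0:ℝ) 1))
    (hpos1 : ∀ x y, x ∈ Ioo 0 x₁ → y ∈ Ioo (0:ℝ) 1 →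
      DifferentiableAt ℝ (fun x' => F (x', y)) x ∧
      DifferentiableAt ℝ (fun y' => deriv (fun x' => F (x', y')) x) y ∧
      0 < deriv (fun y' => deriv (fun x' => F (x', y')) x) y)
    (hneg : ∀ x y, x ∈ Ioo x₁ x₂ → y ∈ Ioo (0:ℝ) 1 →
      DifferentiableAt ℝ (fun x' => F (x', y)) x ∧
      DifferentiableAt ℝ (fun y' => deriv (fun x' => F (x', y')) x) y ∧
      deriv (fun y' => deriv (fun x' => F (x', y')) x) y < 0)
    (hpos2 : ∀ x y, x ∈ Ioo x₂ 1 → y ∈ Ioo (0:ℝ) 1 →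
      DifferentiableAt ℝ (fun x' => F (x', y)) x ∧
      DifferentiableAt ℝ (fun y' => deriv (fun x' => F (x', y')) x) y ∧
      0 < deriv (fun y' => deriv (fun x' => F (x', y')) x) y)
    (μstar : Measure (ℝ × ℝ)) (hds : IsDoublyStochastic μstar)
    (hmax : ∀ μ : Measure (ℝ × ℝ), IsDoublyStochastic μ →
      ∫ p, F p ∂μ ≤ ∫ p, F p ∂μstar)
    (C : ℝ → ℝ → ℝ) (hC : ∀ x y, C x y = copulaOf μstar x y)
    (h₁ h₂ : ℝ → ℝ) (hh₁ : ∀ y, h₁ y = C x₁ y) (hh₂ : ∀ y, h₂ y = C x₂ y) :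
    ∀ x ∈ Icc (0:ℝ) 1, ∀ y ∈ Icc (0:ℝ) 1,
      (x ∈ Icc 0 x₁ → C x y = min x (h₁ y)) ∧
      (x ∈ Icc x₁ x₂ → C x y = max (x + h₂ y - x₂) (h₁ y)) ∧
      (x ∈ Icc x₂ 1 → C x y = min (x - x₂ + h₂ y) y) := by
  intro x _ y hy
  simp only [hC, hh₁, hh₂]
  refine ⟨fun hx => ?_, fun hx => ?_, fun hx => ?_⟩
  · have := hds.copulaOf_eq_min le_rfl hx (hx₁₂.trans hx₂).le hy
      (hds.measure_eq_zero_or_of_deriv_deriv_pos hFcont hmax le_rfl hx (hx₁₂.trans hx₂).le hy hpos1)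
    rwa [hds.copulaOf_zero_left, sub_zero, add_zero] at this
  · exact hds.copulaOf_eq_max hx₁.le hx hx₂.le hy
      (hds.measure_eq_zero_or_of_deriv_deriv_neg hFcont hmax hx₁.le hx hx₂.le hy hneg)
  · have := hds.copulaOf_eq_min (hx₁.trans hx₁₂).le hx le_rfl hy
      (hds.measure_eq_zero_or_of_deriv_deriv_pos hFcont hmax (hx₁.trans hx₁₂).le hx le_rfl hy hpos2)
    rwa [hds.copulaOf_one_left hy] at this
end

section
/- Let 0 < x₁ < x₂ < 1 and let F : [0,1]² → ℝ be continuous. Call a pair (h₁,h₂) admissible if h₁, h₂ : [0,1] → ℝ are continuously differentiable with h₁(0) = h₂(0) = 0, h₁(1) = x₁, h₂(1) = x₂ and 0 ≤ h₁'(y) ≤ h₂'(y) ≤ 1 for all y; for such a pair set G(h₁,h₂) = ∫₀¹ [ F(h₁(y),y) h₁'(y) + F(x₂ − h₂(y) + h₁(y), y)(h₂'(y) − h₁'(y)) + F(x₂ − h₂(y) + y, y)(1 − h₂'(y)) ] dy, and let μ(h₁,h₂) denote a doubly stochastic measure whose distribution function μ([0,x]×[0,y]) equals min(x,h₁(y))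 for x ∈ [0,x₁], max(x + h₂(y) − x₂, h₁(y)) for x ∈ [x₁,x₂], and min(x − x₂ + h₂(y), y) for x ∈ [x₂,1]. If (h₁*,h₂*) is admissible and G(h₁*,h₂*) ≥ G(h₁,h₂) for every admissible pair (h₁,h₂), then ∫ F dμ(h₁*,h₂*) ≥ ∫ F dμ(h₁,h₂) for every admissible pair (h₁,h₂) (where the corresponding doubly stochastic measures are assumed to exist), and ∫ F dμ(h₁*,h₂*) = G(h₁*,h₂*). -/
/-!
The distribution function prescribed by `HasPiecewiseDF` determines the measure. By the
fundamental theorem of calculus for `y ↦ min (c y) x`, it is also the distribution function of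
the sum of three measures carried by the curves `x = h₁ y`, `x = x₂ - h₂ y + h₁ y` and
`x = x₂ - h₂ y + y`, with densities `h₁' y`, `h₂' y - h₁' y` and `1 - h₂' y` in `y`. Integrating
`F` against this sum gives `G(h₁, h₂)`, so `∫ F dμ(h₁, h₂) = G(h₁, h₂)` for every admissible pair,
and the maximality of `G` at `(h₁*, h₂*)` concludes.
-/

open MeasureTheory Set

/-- An admissible quadruple `(h₁, h₂)` together with its (continuous) derivatives
`(h₁', h₂')` on `[0,1]`. -/
def Admissible (x₁ x₂ : ℝ) (h₁ h₂ h₁' h₂' : ℝ → ℝ) : Prop :=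
  (∀ y ∈ Icc (0:ℝ) 1, HasDerivWithinAt h₁ (h₁' y) (Icc 0 1) y) ∧
  (∀ y ∈ Icc (0:ℝ) 1, HasDerivWithinAt h₂ (h₂' y) (Icc 0 1) y) ∧
  ContinuousOn h₁' (Icc (0:ℝ) 1) ∧ ContinuousOn h₂' (Icc (0:ℝ) 1) ∧
  h₁ 0 = 0 ∧ h₂ 0 = 0 ∧ h₁ 1 = x₁ ∧ h₂ 1 = x₂ ∧
  ∀ y ∈ Icc (0:ℝ) 1, 0 ≤ h₁' y ∧ h₁' y ≤ h₂' y ∧ h₂' y ≤ 1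

/-- The functional `G(h₁,h₂)` associated with `F` and the pair `(h₁,h₂)`. -/
noncomputable def Gfun (F : ℝ × ℝ → ℝ) (x₂ : ℝ) (h₁ h₂ h₁' h₂' : ℝ → ℝ) : ℝ :=
  ∫ y in (0:ℝ)..1,
    (F (h₁ y, y) * h₁' y +
     F (x₂ - h₂ y + h₁ y, y) * (h₂' y - h₁' y) +
     F (x₂ - h₂ y + y, y) * (1 - h₂' y))

/-- `μ` has the piecewise distribution function determined by `(h₁,h₂)`. -/
def HasPiecewiseDF (x₁ x₂ : ℝ) (h₁ h₂ : ℝ → ℝ) (μ : Measure (ℝ × ℝ)) : Prop :=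
  ∀ x ∈ Icc (0:ℝ) 1, ∀ y ∈ Icc (0:ℝ) 1,
    (x ∈ Icc 0 x₁ → (μ (Icc 0 x ×ˢ Icc 0 y)).toReal = min x (h₁ y)) ∧
    (x ∈ Icc x₁ x₂ → (μ (Icc 0 x ×ˢ Icc 0 y)).toReal = max (x + h₂ y - x₂) (h₁ y)) ∧
    (x ∈ Icc x₂ 1 → (μ (Icc 0 x ×ˢ Icc 0 y)).toReal = min (x - x₂ + h₂ y) y)

open Filter

lemma countable_setOf_eq_and_deriv_ne {c c' : ℝ → ℝ} {s : Set ℝ}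
    (hc : ∀ t ∈ s, HasDerivAt c (c' t) t) (x : ℝ) :
    {t | t ∈ s ∧ c t = x ∧ c' t ≠ 0}.Countable := by
  rw [← Set.countable_coe_iff]
  have : DiscreteTopology {t | t ∈ s ∧ c t = x ∧ c' t ≠ 0} := by
    rw [discreteTopology_subtype_iff]
    rintro t ⟨ht, hct, hne⟩
    rw [inf_principal_eq_bot]
    filter_upwards [(hasDerivAt_iff_tendsto_slope.1 (hc t ht)).eventually_ne hne,
      self_mem_nhdsWithin] with u hslope hut
    rintro ⟨-, hcu, -⟩
    exact hslope (by simp [slope_def_field, hcu, hct])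
  exact countable_of_Lindelof_of_discrete

lemma HasDerivAt.min_const {c : ℝ → ℝ} {c' t : ℝ} (hc : HasDerivAt c c' t) (x : ℝ)
    (h : c t ≠ x ∨ c' = 0) :
    HasDerivAt (fun u => min (c u) x) (if c t ≤ x then c' else 0) t := by
  rcases lt_trichotomy (c t) x with hlt | heq | hgt
  · rw [if_pos hlt.le]
    refine hc.congr_of_eventuallyEq ?_
    filter_upwards [hc.continuousAt.eventually_lt_const hlt] with u hu
    exact min_eq_left hu.le
  · -- `min · x` is 1-Lipschitz, so it inherits the vanishing derivative of `c` at `t`.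
    have hc' : c' = 0 := h.resolve_left (not_not.2 heq)
    rw [if_pos heq.le, hc', hasDerivAt_iff_isLittleO]
    rw [hc', hasDerivAt_iff_isLittleO] at hc
    refine (Asymptotics.isBigO_of_le _ fun u => ?_).trans_isLittleO hc
    simpa [heq] using abs_min_sub_min_le_max (c u) x (c t) x
  · rw [if_neg hgt.not_ge]
    refine (hasDerivAt_const t x).congr_of_eventuallyEq ?_
    filter_upwards [hc.continuousAt.eventually_const_lt hgt] with u hu
    exact min_eq_right hu.le

lemma setIntegral_sublevel_deriv_eq {c c' : ℝ → ℝ} {a b : ℝ} (hab : a ≤ b)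
    (hc : ∀ t ∈ Icc a b, HasDerivWithinAt c (c' t) (Icc a b) t)
    (hc' : ContinuousOn c' (Icc a b)) (x : ℝ) :
    ∫ t in Icc a b ∩ c ⁻¹' Iic x, c' t = min (c b) x - min (c a) x := by
  have hcont : ContinuousOn c (Icc a b) := fun t ht => (hc t ht).continuousWithinAt
  have hderiv : ∀ t ∈ Ioo a b, HasDerivAt c (c' t) t := fun t ht =>
    (hc t (Ioo_subset_Icc_self ht)).hasDerivAt (Icc_mem_nhds ht.1 ht.2)
  set A := Icc a b ∩ c ⁻¹' Iic x
  have hA : MeasurableSet A :=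
    (hcont.preimage_isClosed_of_isClosed isClosed_Icc isClosed_Iic).measurableSet
  have hint : IntervalIntegrable (A.indicator c') volume a b :=
    (intervalIntegrable_iff_integrableOn_Icc_of_le hab).2 (hc'.integrableOn_Icc.indicator hA)
  rw [show ∫ t in A, c' t = ∫ t in a..b, A.indicator c' t by
    rw [intervalIntegral.integral_of_le hab, ← integral_Icc_eq_integral_Ioc,
      setIntegral_indicator hA, inter_eq_self_of_subset_right inter_subset_left]]
  -- `min (c ·) x` has derivative `A.indicator c'` except at the isolated zeros of `c - x`
  -- where `c' ≠ 0`.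
  refine integral_eq_of_hasDerivAt_off_countable_of_le _ _ hab
    (countable_setOf_eq_and_deriv_ne hderiv x) (hcont.inf continuousOn_const) ?_ hint
  rintro t ⟨ht, hts⟩
  have hne : c t ≠ x ∨ c' t = 0 := by
    by_contra! h'
    exact hts ⟨ht, h'.1, h'.2⟩
  refine ((hderiv t ht).min_const x hne).congr_deriv ?_
  by_cases hx : c t ≤ x
  · rw [if_pos hx, indicator_of_mem (show t ∈ A from ⟨Ioo_subset_Icc_self ht, hx⟩)]
  · rw [if_neg hx, indicator_of_notMem fun h => hx h.2]

lemma ContinuousOn.integrable_of_measure_compl_eq_zero {X : Type*} [TopologicalSpace X]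
    [T2Space X] [MeasurableSpace X] [OpensMeasurableSpace X] {μ : Measure X} [IsFiniteMeasure μ]
    {K : Set X} {G : X → ℝ} (hK : IsCompact K) (hG : ContinuousOn G K) (hμ : μ Kᶜ = 0) :
    Integrable G μ := by
  rw [← Measure.restrict_eq_self_of_ae_mem (ae_iff.2 hμ)]
  exact hG.integrableOn_compact hK

section GraphMeasure

variable {c w : ℝ → ℝ}

noncomputable def graphMeasure (c w : ℝ → ℝ) : Measure (ℝ × ℝ) :=
  ((volume.restrict (Icc (0:ℝ) 1)).withDensity fun t => ENNReal.ofReal (w t)).map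
    fun t => (c t, t)

lemma aemeasurable_graph (hc : ContinuousOn c (Icc 0 1)) :
    AEMeasurable (fun t => (c t, t))
      ((volume.restrict (Icc (0:ℝ) 1)).withDensity fun t => ENNReal.ofReal (w t)) :=
  ((hc.prodMk continuousOn_id).aemeasurable measurableSet_Icc).mono'
    (withDensity_absolutelyContinuous _ _)

lemma isFiniteMeasure_graphMeasure (hw : ContinuousOn w (Icc 0 1)) :
    IsFiniteMeasure (graphMeasure c w) := by
  have := isFiniteMeasure_withDensity_ofReal
    (hw.integrableOn_Icc (μ := volume)).hasFiniteIntegral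
  unfold graphMeasure
  infer_instance

lemma graphMeasure_compl_square (hc : ContinuousOn c (Icc 0 1))
    (hcI : MapsTo c (Icc 0 1) (Icc 0 1)) :
    graphMeasure c w (Icc 0 1 ×ˢ Icc 0 1)ᶜ = 0 := by
  rw [graphMeasure, Measure.map_apply_of_aemeasurable (aemeasurable_graph hc)
    (measurableSet_Icc.prod measurableSet_Icc).compl]
  refine measure_mono_null (t := (Icc 0 1)ᶜ) (fun t ht ht01 => ht ⟨hcI ht01, ht01⟩)
    (withDensity_absolutelyContinuous _ _ ?_)
  rw [Measure.restrict_apply measurableSet_Icc.compl, compl_inter_self, measure_empty]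

lemma graphMeasure_prod_Icc (hc : ContinuousOn c (Icc 0 1))
    (hc0 : ∀ t ∈ Icc (0:ℝ) 1, 0 ≤ c t) (hw : ContinuousOn w (Icc 0 1))
    (hw0 : ∀ t ∈ Icc (0:ℝ) 1, 0 ≤ w t) (x : ℝ) {y : ℝ} (hy : y ∈ Icc (0:ℝ) 1) :
    graphMeasure c w (Icc 0 x ×ˢ Icc 0 y) =
      ENNReal.ofReal (∫ t in Icc 0 y ∩ c ⁻¹' Iic x, w t) := by
  have hsub : Icc 0 y ⊆ Icc (0:ℝ) 1 := Icc_subset_Icc_right hy.2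
  set A := Icc 0 y ∩ c ⁻¹' Iic x
  have hA : MeasurableSet A :=
    ((hc.mono hsub).preimage_isClosed_of_isClosed isClosed_Icc isClosed_Iic).measurableSet
  have hpre : (fun t => (c t, t)) ⁻¹' (Icc 0 x ×ˢ Icc 0 y) ∩ Icc 0 1 = A := by
    ext t
    simp only [A, mem_inter_iff, mem_preimage, mem_prod, mem_Icc, mem_Iic]
    constructor
    · rintro ⟨⟨⟨-, hcx⟩, ht⟩, -⟩
      exact ⟨ht, hcx⟩
    · rintro ⟨ht, hcx⟩
      exact ⟨⟨⟨hc0 t (hsub ht), hcx⟩, ht⟩, hsub ht⟩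
  rw [graphMeasure, Measure.map_apply_of_aemeasurable (aemeasurable_graph hc)
    (measurableSet_Icc.prod measurableSet_Icc), withDensity_apply' _,
    Measure.restrict_restrict' measurableSet_Icc, hpre,
    ofReal_integral_eq_lintegral_ofReal]
  · exact hw.integrableOn_Icc.mono_set (inter_subset_left.trans hsub)
  · exact ae_restrict_of_forall_mem hA fun t ht => hw0 t (hsub ht.1)

lemma integrable_graphMeasure (hc : ContinuousOn c (Icc 0 1))
    (hcI : MapsTo c (Icc 0 1) (Icc 0 1)) (hw : ContinuousOn w (Icc 0 1)) {G : ℝ × ℝ → ℝ}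
    (hG : ContinuousOn G (Icc 0 1 ×ˢ Icc 0 1)) : Integrable G (graphMeasure c w) :=
  have := isFiniteMeasure_graphMeasure (c := c) hw
  hG.integrable_of_measure_compl_eq_zero (isCompact_Icc.prod isCompact_Icc)
    (graphMeasure_compl_square hc hcI)

lemma integral_graphMeasure (hc : ContinuousOn c (Icc 0 1))
    (hcI : MapsTo c (Icc 0 1) (Icc 0 1)) (hw : ContinuousOn w (Icc 0 1))
    (hw0 : ∀ t ∈ Icc (0:ℝ) 1, 0 ≤ w t) {G : ℝ × ℝ → ℝ}
    (hG : ContinuousOn G (Icc 0 1 ×ˢ Icc 0 1)) :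
    ∫ p, G p ∂graphMeasure c w = ∫ t in (0:ℝ)..1, G (c t, t) * w t := by
  rw [graphMeasure, integral_map (aemeasurable_graph hc)
      (integrable_graphMeasure hc hcI hw hG).aestronglyMeasurable,
    integral_withDensity_eq_integral_toReal_smul₀
      (hw.aemeasurable measurableSet_Icc).ennreal_ofReal
      (ae_of_all _ fun _ => ENNReal.ofReal_lt_top),
    intervalIntegral.integral_of_le zero_le_one, ← integral_Icc_eq_integral_Ioc]
  refine setIntegral_congr_fun measurableSet_Icc fun t ht => ?_
  rw [ENNReal.toReal_ofReal (hw0 t ht), smul_eq_mul, mul_comm]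

lemma intervalIntegrable_comp_graph_mul (hc : ContinuousOn c (Icc 0 1))
    (hcI : MapsTo c (Icc 0 1) (Icc 0 1)) (hw : ContinuousOn w (Icc 0 1)) {G : ℝ × ℝ → ℝ}
    (hG : ContinuousOn G (Icc 0 1 ×ˢ Icc 0 1)) :
    IntervalIntegrable (fun t => G (c t, t) * w t) volume 0 1 :=
  ((hG.comp (hc.prodMk continuousOn_id) fun _ ht => ⟨hcI ht, ht⟩).mul hw).intervalIntegrable_of_Icc
    zero_le_one

end GraphMeasure

lemma MeasureTheory.Measure.ext_of_Iic_prod_Iic (μ ν : Measure (ℝ × ℝ)) [IsFiniteMeasure μ]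
    (h : ∀ a b, μ (Iic a ×ˢ Iic b) = ν (Iic a ×ˢ Iic b)) (huniv : μ univ = ν univ) :
    μ = ν := by
  have hspan : IsCountablySpanning (range (Iic : ℝ → Set ℝ)) :=
    ⟨fun n => Iic (n : ℝ), fun n => mem_range_self _,
      iUnion_eq_univ_iff.2 fun x => (exists_nat_ge x).imp fun _ hn => hn⟩
  refine ext_of_generate_finite (image2 (· ×ˢ ·) (range Iic) (range Iic)) ?_ ?_ ?_ huniv
  · rw [← generateFrom_prod_eq hspan hspan, ← borel_eq_generateFrom_Iic,
      ← BorelSpace.measurable_eq]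
  · rintro _ ⟨_, ⟨a, rfl⟩, _, ⟨b, rfl⟩, rfl⟩ _ ⟨_, ⟨a', rfl⟩, _, ⟨b', rfl⟩, rfl⟩ -
    rw [prod_inter_prod, Iic_inter_Iic, Iic_inter_Iic]
    exact mem_image2_of_mem (mem_range_self _) (mem_range_self _)
  · rintro _ ⟨_, ⟨a, rfl⟩, _, ⟨b, rfl⟩, rfl⟩
    exact h a b

lemma MeasureTheory.Measure.ext_of_prod_Icc_of_compl_square (μ ν : Measure (ℝ × ℝ))
    [IsFiniteMeasure μ]
    (hμ : μ (Icc 0 1 ×ˢ Icc 0 1)ᶜ = 0) (hν : ν (Icc 0 1 ×ˢ Icc 0 1)ᶜ = 0)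
    (h : ∀ x ∈ Icc (0:ℝ) 1, ∀ y ∈ Icc (0:ℝ) 1,
      μ (Icc 0 x ×ˢ Icc 0 y) = ν (Icc 0 x ×ˢ Icc 0 y)) :
    μ = ν := by
  have h' : ∀ x ≤ (1:ℝ), ∀ y ≤ (1:ℝ), μ (Icc 0 x ×ˢ Icc 0 y) = ν (Icc 0 x ×ˢ Icc 0 y) := by
    intro x hx y hy
    rcases lt_or_ge x 0 with hx0 | hx0
    · simp [Icc_eq_empty_of_lt hx0]
    rcases lt_or_ge y 0 with hy0 | hy0
    · simp [Icc_eq_empty_of_lt hy0]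
    exact h x ⟨hx0, hx⟩ y ⟨hy0, hy⟩
  have hsquare : ∀ a b : ℝ, (Iic a ×ˢ Iic b) ∩ (Icc 0 1 ×ˢ Icc 0 1) =
      Icc 0 (min a 1) ×ˢ Icc 0 (min b 1) := by
    intro a b
    ext ⟨p, q⟩
    simp only [mem_inter_iff, mem_prod, mem_Iic, mem_Icc, le_min_iff]
    tauto
  refine Measure.ext_of_Iic_prod_Iic μ ν (fun a b => ?_) ?_
  · rw [← measure_inter_conull hμ, ← measure_inter_conull hν, hsquare]
    exact h' _ (min_le_right _ _) _ (min_le_right _ _)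
  · rw [← measure_inter_conull hμ, ← measure_inter_conull hν, univ_inter]
    exact h 1 (right_mem_Icc.2 zero_le_one) 1 (right_mem_Icc.2 zero_le_one)

lemma monotoneOn_Icc_of_hasDerivWithinAt_nonneg {f f' : ℝ → ℝ} {a b : ℝ}
    (hf : ∀ t ∈ Icc a b, HasDerivWithinAt f (f' t) (Icc a b) t)
    (hf' : ∀ t ∈ Icc a b, 0 ≤ f' t) : MonotoneOn f (Icc a b) :=
  monotoneOn_of_hasDerivWithinAt_nonneg (convex_Icc a b)
    (fun t ht => (hf t ht).continuousWithinAt)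
    (fun t ht => (hf t (interior_subset ht)).mono interior_subset)
    fun t ht => hf' t (interior_subset ht)

noncomputable def admissibleMeasure (x₂ : ℝ) (h₁ h₂ h₁' h₂' : ℝ → ℝ) : Measure (ℝ × ℝ) :=
  graphMeasure h₁ h₁' + graphMeasure (fun y => x₂ - h₂ y + h₁ y) (fun y => h₂' y - h₁' y) +
    graphMeasure (fun y => x₂ - h₂ y + y) (fun y => 1 - h₂' y)

namespace Admissible

variable {x₁ x₂ : ℝ} {h₁ h₂ h₁' h₂' : ℝ → ℝ} (hadm : Admissible x₁ x₂ h₁ h₂ h₁' h₂')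
include hadm

lemma h₁_mem_Icc {y : ℝ} (hy : y ∈ Icc (0:ℝ) 1) : h₁ y ∈ Icc 0 x₁ := by
  obtain ⟨hd₁, -, -, -, h₁0, -, h₁1, -, hineq⟩ := hadm
  have := (monotoneOn_Icc_of_hasDerivWithinAt_nonneg hd₁ fun t ht => (hineq t ht).1).mapsTo_Icc hy
  rwa [h₁0, h₁1] at this

lemma sub_h₂_add_h₁_mem_Icc {y : ℝ} (hy : y ∈ Icc (0:ℝ) 1) :
    x₂ - h₂ y + h₁ y ∈ Icc x₁ x₂ := by
  obtain ⟨hd₁, hd₂, -, -, h₁0, h₂0, h₁1, h₂1, hineq⟩ := hadm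
  have := (monotoneOn_Icc_of_hasDerivWithinAt_nonneg (fun t ht => (hd₂ t ht).sub (hd₁ t ht))
    fun t ht => sub_nonneg.2 (hineq t ht).2.1).mapsTo_Icc hy
  simp only [mem_Icc, Pi.sub_apply, h₁0, h₂0, h₁1, h₂1] at this ⊢
  constructor <;> linarith [this.1, this.2]

lemma sub_h₂_add_self_mem_Icc {y : ℝ} (hy : y ∈ Icc (0:ℝ) 1) :
    x₂ - h₂ y + y ∈ Icc x₂ 1 := by
  obtain ⟨-, hd₂, -, -, -, h₂0, -, h₂1, hineq⟩ := hadm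
  have := (monotoneOn_Icc_of_hasDerivWithinAt_nonneg
    (fun t ht => (hasDerivWithinAt_id t _).sub (hd₂ t ht))
    fun t ht => sub_nonneg.2 (hineq t ht).2.2).mapsTo_Icc hy
  simp only [mem_Icc, Pi.sub_apply, id, h₂0, h₂1] at this ⊢
  constructor <;> linarith [this.1, this.2]

lemma hasDerivWithinAt_sub_h₂_add_h₁ :
    ∀ t ∈ Icc (0:ℝ) 1, HasDerivWithinAt (fun y => x₂ - h₂ y + h₁ y) (h₁' t - h₂' t) (Icc 0 1) t :=
  fun t ht => (((hasDerivWithinAt_const t _ x₂).sub (hadm.2.1 t ht)).add (hadm.1 t ht)).congr_deriv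
    (by ring)

lemma hasDerivWithinAt_sub_h₂_add_self :
    ∀ t ∈ Icc (0:ℝ) 1, HasDerivWithinAt (fun y => x₂ - h₂ y + y) (1 - h₂' t) (Icc 0 1) t :=
  fun t ht => (((hasDerivWithinAt_const t _ x₂).sub (hadm.2.1 t ht)).add
    (hasDerivWithinAt_id t _)).congr_deriv (by ring)

lemma continuousOn_h₁ : ContinuousOn h₁ (Icc 0 1) := fun t ht => (hadm.1 t ht).continuousWithinAt

lemma continuousOn_sub_h₂_add_h₁ : ContinuousOn (fun y => x₂ - h₂ y + h₁ y) (Icc 0 1) :=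
  fun t ht => (hadm.hasDerivWithinAt_sub_h₂_add_h₁ t ht).continuousWithinAt

lemma continuousOn_sub_h₂_add_self : ContinuousOn (fun y => x₂ - h₂ y + y) (Icc 0 1) :=
  fun t ht => (hadm.hasDerivWithinAt_sub_h₂_add_self t ht).continuousWithinAt

lemma zero_le_x₁ : 0 ≤ x₁ :=
  nonempty_Icc.1 ⟨_, hadm.h₁_mem_Icc (left_mem_Icc.2 zero_le_one)⟩

lemma x₁_le_x₂ : x₁ ≤ x₂ :=
  nonempty_Icc.1 ⟨_, hadm.sub_h₂_add_h₁_mem_Icc (left_mem_Icc.2 zero_le_one)⟩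

lemma x₂_le_one : x₂ ≤ 1 :=
  nonempty_Icc.1 ⟨_, hadm.sub_h₂_add_self_mem_Icc (left_mem_Icc.2 zero_le_one)⟩

lemma mapsTo_h₁ : MapsTo h₁ (Icc 0 1) (Icc 0 1) := fun _ hy =>
  Icc_subset_Icc_right (hadm.x₁_le_x₂.trans hadm.x₂_le_one) (hadm.h₁_mem_Icc hy)

lemma mapsTo_sub_h₂_add_h₁ : MapsTo (fun y => x₂ - h₂ y + h₁ y) (Icc 0 1) (Icc 0 1) :=
  fun _ hy => Icc_subset_Icc hadm.zero_le_x₁ hadm.x₂_le_one (hadm.sub_h₂_add_h₁_mem_Icc hy)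

lemma mapsTo_sub_h₂_add_self : MapsTo (fun y => x₂ - h₂ y + y) (Icc 0 1) (Icc 0 1) :=
  fun _ hy => Icc_subset_Icc_left (hadm.zero_le_x₁.trans hadm.x₁_le_x₂)
    (hadm.sub_h₂_add_self_mem_Icc hy)

lemma admissibleMeasure_compl_square :
    admissibleMeasure x₂ h₁ h₂ h₁' h₂' (Icc 0 1 ×ˢ Icc 0 1)ᶜ = 0 := by
  simp only [admissibleMeasure, Measure.add_apply,
    graphMeasure_compl_square hadm.continuousOn_h₁ hadm.mapsTo_h₁,
    graphMeasure_compl_square hadm.continuousOn_sub_h₂_add_h₁ hadm.mapsTo_sub_h₂_add_h₁,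
    graphMeasure_compl_square hadm.continuousOn_sub_h₂_add_self hadm.mapsTo_sub_h₂_add_self,
    add_zero]

lemma admissibleMeasure_prod_Icc {x y : ℝ} (hx : 0 ≤ x) (hy : y ∈ Icc (0:ℝ) 1) :
    admissibleMeasure x₂ h₁ h₂ h₁' h₂' (Icc 0 x ×ˢ Icc 0 y) =
      ENNReal.ofReal (min (h₁ y) x - min (x₂ - h₂ y + h₁ y) x + min (x₂ - h₂ y + y) x) := by
  have ⟨hd₁, _, hc₁, hc₂, h₁0, h₂0, _, _, hineq⟩ := hadm
  have hsub : Icc 0 y ⊆ Icc (0:ℝ) 1 := Icc_subset_Icc_right hy.2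
  have ftc : ∀ c c' : ℝ → ℝ, (∀ t ∈ Icc (0:ℝ) 1, HasDerivWithinAt c (c' t) (Icc 0 1) t) →
      ContinuousOn c' (Icc 0 1) →
      ∫ t in Icc 0 y ∩ c ⁻¹' Iic x, c' t = min (c y) x - min (c 0) x := fun c c' hc hc' =>
    setIntegral_sublevel_deriv_eq hy.1 (fun t ht => (hc t (hsub ht)).mono hsub) (hc'.mono hsub) x
  have m₁ := hadm.h₁_mem_Icc hy
  have m₂ := hadm.sub_h₂_add_h₁_mem_Icc hy
  have m₃ := hadm.sub_h₂_add_self_mem_Icc hy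
  have g₁ : graphMeasure h₁ h₁' (Icc 0 x ×ˢ Icc 0 y) = ENNReal.ofReal (min (h₁ y) x) := by
    rw [graphMeasure_prod_Icc hadm.continuousOn_h₁ (fun t ht => (hadm.h₁_mem_Icc ht).1) hc₁
      (fun t ht => (hineq t ht).1) x hy, ftc _ _ hd₁ hc₁, h₁0, min_eq_left hx, sub_zero]
  have g₂ : graphMeasure (fun y => x₂ - h₂ y + h₁ y) (fun y => h₂' y - h₁' y)
      (Icc 0 x ×ˢ Icc 0 y) = ENNReal.ofReal (min x₂ x - min (x₂ - h₂ y + h₁ y) x) := by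
    have e := ftc _ _ hadm.hasDerivWithinAt_sub_h₂_add_h₁ (hc₁.sub hc₂)
    simp only [h₁0, h₂0, sub_zero, add_zero] at e
    rw [graphMeasure_prod_Icc (w := fun y => h₂' y - h₁' y) hadm.continuousOn_sub_h₂_add_h₁
      (fun t ht => (hadm.mapsTo_sub_h₂_add_h₁ ht).1) (hc₂.sub hc₁)
      (fun t ht => sub_nonneg.2 (hineq t ht).2.1) x hy, ← neg_sub, ← e,
      ← integral_neg]
    simp only [neg_sub]
  have g₃ : graphMeasure (fun y => x₂ - h₂ y + y) (fun y => 1 - h₂' y)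
      (Icc 0 x ×ˢ Icc 0 y) = ENNReal.ofReal (min (x₂ - h₂ y + y) x - min x₂ x) := by
    have e := ftc _ _ hadm.hasDerivWithinAt_sub_h₂_add_self (continuousOn_const.sub hc₂)
    simp only [h₂0, sub_zero, add_zero] at e
    rw [graphMeasure_prod_Icc (w := fun y => 1 - h₂' y) hadm.continuousOn_sub_h₂_add_self
      (fun t ht => (hadm.mapsTo_sub_h₂_add_self ht).1) (continuousOn_const.sub hc₂) (fun t ht => sub_nonneg.2 (hineq t ht).2.2) x hy, e]
  have n₁ : 0 ≤ min (h₁ y) x := le_min m₁.1 hx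
  have n₂ : 0 ≤ min x₂ x - min (x₂ - h₂ y + h₁ y) x := sub_nonneg.2 (min_le_min_right x m₂.2)
  have n₃ : 0 ≤ min (x₂ - h₂ y + y) x - min x₂ x := sub_nonneg.2 (min_le_min_right x m₃.1)
  rw [admissibleMeasure, Measure.add_apply, Measure.add_apply, g₁, g₂, g₃,
    ← ENNReal.ofReal_add n₁ n₂, ← ENNReal.ofReal_add (add_nonneg n₁ n₂) n₃]
  ring_nf

lemma measure_prod_Icc_of_hasPiecewiseDF {μ : Measure (ℝ × ℝ)} [IsFiniteMeasure μ]
    (hdf : HasPiecewiseDF x₁ x₂ h₁ h₂ μ) {x y : ℝ} (hx : x ∈ Icc (0:ℝ) 1)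
    (hy : y ∈ Icc (0:ℝ) 1) :
    μ (Icc 0 x ×ˢ Icc 0 y) =
      ENNReal.ofReal (min (h₁ y) x - min (x₂ - h₂ y + h₁ y) x + min (x₂ - h₂ y + y) x) := by
  obtain ⟨df₁, df₂, df₃⟩ := hdf x hx y hy
  have m₁ := hadm.h₁_mem_Icc hy
  have m₂ := hadm.sub_h₂_add_h₁_mem_Icc hy
  have m₃ := hadm.sub_h₂_add_self_mem_Icc hy
  rw [← ENNReal.ofReal_toReal (measure_ne_top μ _)]
  congr 1
  rcases le_total x x₁ with hx₁ | hx₁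
  · rw [df₁ ⟨hx.1, hx₁⟩]
    simp only [mem_Icc, min_def] at hx m₁ m₂ m₃ ⊢
    split_ifs <;> linarith
  rcases le_total x x₂ with hx₂ | hx₂
  · rw [df₂ ⟨hx₁, hx₂⟩]
    simp only [mem_Icc, min_def, max_def] at hx m₁ m₂ m₃ ⊢
    split_ifs <;> linarith
  · rw [df₃ ⟨hx₂, hx.2⟩]
    simp only [mem_Icc, min_def] at hx m₁ m₂ m₃ ⊢
    split_ifs <;> linarith

lemma eq_admissibleMeasure {μ : Measure (ℝ × ℝ)} [IsProbabilityMeasure μ]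
    (hdf : HasPiecewiseDF x₁ x₂ h₁ h₂ μ) : μ = admissibleMeasure x₂ h₁ h₂ h₁' h₂' := by
  have ⟨_, _, _, _, _, _, h₁1, h₂1, _⟩ := hadm
  have hsquare : μ (Icc 0 1 ×ˢ Icc 0 1) = 1 := by
    rw [hadm.measure_prod_Icc_of_hasPiecewiseDF hdf (right_mem_Icc.2 zero_le_one)
      (right_mem_Icc.2 zero_le_one), h₁1, h₂1]
    simp
  refine Measure.ext_of_prod_Icc_of_compl_square μ _
    ((prob_compl_eq_zero_iff (measurableSet_Icc.prod measurableSet_Icc)).2 hsquare)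
    hadm.admissibleMeasure_compl_square fun x hx y hy => ?_
  rw [hadm.measure_prod_Icc_of_hasPiecewiseDF hdf hx hy, hadm.admissibleMeasure_prod_Icc hx.1 hy]

lemma integral_admissibleMeasure {F : ℝ × ℝ → ℝ} (hF : ContinuousOn F (Icc 0 1 ×ˢ Icc 0 1)) :
    ∫ p, F p ∂admissibleMeasure x₂ h₁ h₂ h₁' h₂' = Gfun F x₂ h₁ h₂ h₁' h₂' := by
  have ⟨_, _, hc₁, hc₂, _, _, _, _, hineq⟩ := hadm
  have hc₂₁ : ContinuousOn (fun y => h₂' y - h₁' y) (Icc 0 1) := hc₂.sub hc₁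
  have hc₂' : ContinuousOn (fun y => 1 - h₂' y) (Icc 0 1) := continuousOn_const.sub hc₂
  have i₁ := integrable_graphMeasure hadm.continuousOn_h₁ hadm.mapsTo_h₁ hc₁ hF
  have i₂ := integrable_graphMeasure hadm.continuousOn_sub_h₂_add_h₁ hadm.mapsTo_sub_h₂_add_h₁
    hc₂₁ hF
  have i₃ := integrable_graphMeasure hadm.continuousOn_sub_h₂_add_self hadm.mapsTo_sub_h₂_add_self
    hc₂' hF
  have j₁ := intervalIntegrable_comp_graph_mul hadm.continuousOn_h₁ hadm.mapsTo_h₁ hc₁ hF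
  have j₂ := intervalIntegrable_comp_graph_mul hadm.continuousOn_sub_h₂_add_h₁
    hadm.mapsTo_sub_h₂_add_h₁ hc₂₁ hF
  have j₃ := intervalIntegrable_comp_graph_mul hadm.continuousOn_sub_h₂_add_self
    hadm.mapsTo_sub_h₂_add_self hc₂' hF
  rw [admissibleMeasure, integral_add_measure (i₁.add_measure i₂) i₃, integral_add_measure i₁ i₂,
    integral_graphMeasure hadm.continuousOn_h₁ hadm.mapsTo_h₁ hc₁ (fun t ht => (hineq t ht).1) hF,
    integral_graphMeasure hadm.continuousOn_sub_h₂_add_h₁ hadm.mapsTo_sub_h₂_add_h₁ hc₂₁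
      (fun t ht => sub_nonneg.2 (hineq t ht).2.1) hF,
    integral_graphMeasure hadm.continuousOn_sub_h₂_add_self hadm.mapsTo_sub_h₂_add_self hc₂'
      (fun t ht => sub_nonneg.2 (hineq t ht).2.2) hF,
    Gfun, intervalIntegral.integral_add (j₁.add j₂) j₃, intervalIntegral.integral_add j₁ j₂]

lemma integral_eq_Gfun {F : ℝ × ℝ → ℝ} (hF : ContinuousOn F (Icc 0 1 ×ˢ Icc 0 1))
    {μ : Measure (ℝ × ℝ)} [IsProbabilityMeasure μ] (hdf : HasPiecewiseDF x₁ x₂ h₁ h₂ μ) :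
    ∫ p, F p ∂μ = Gfun F x₂ h₁ h₂ h₁' h₂' := by
  rw [hadm.eq_admissibleMeasure hdf, hadm.integral_admissibleMeasure hF]

end Admissible

theorem stmt8_general (x₁ x₂ : ℝ)
    (F : ℝ × ℝ → ℝ) (hFcont : ContinuousOn F (Icc (0:ℝ) 1 ×ˢ Icc (0:ℝ) 1))
    (h₁s h₂s h₁s' h₂s' : ℝ → ℝ)
    (hstar : Admissible x₁ x₂ h₁s h₂s h₁s' h₂s')
    (hmax : ∀ h₁ h₂ h₁' h₂' : ℝ → ℝ, Admissible x₁ x₂ h₁ h₂ h₁' h₂' →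
      Gfun F x₂ h₁ h₂ h₁' h₂' ≤ Gfun F x₂ h₁s h₂s h₁s' h₂s')
    (μs : Measure (ℝ × ℝ)) (hμs : IsDoublyStochastic μs)
    (hμsdf : HasPiecewiseDF x₁ x₂ h₁s h₂s μs) :
    (∀ h₁ h₂ h₁' h₂' : ℝ → ℝ, Admissible x₁ x₂ h₁ h₂ h₁' h₂' →
      ∀ μ : Measure (ℝ × ℝ), IsDoublyStochastic μ → HasPiecewiseDF x₁ x₂ h₁ h₂ μ →
        ∫ p, F p ∂μ ≤ ∫ p, F p ∂μs) ∧
    ∫ p, F p ∂μs = Gfun F x₂ h₁s h₂s h₁s' h₂s' := by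
  have := hμs.1
  have hμs_eq := hstar.integral_eq_Gfun hFcont hμsdf
  refine ⟨fun h₁ h₂ h₁' h₂' hadm μ hμ hdf => ?_, hμs_eq⟩
  have := hμ.1
  rw [hadm.integral_eq_Gfun hFcont hdf, hμs_eq]
  exact hmax h₁ h₂ h₁' h₂' hadm

theorem stmt8 (x₁ x₂ : ℝ) (hx₁ : 0 < x₁) (hx₁₂ : x₁ < x₂) (hx₂ : x₂ < 1)
    (F : ℝ × ℝ → ℝ) (hFcont : ContinuousOn F (Icc (0:ℝ) 1 ×ˢ Icc (0:ℝ) 1))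
    (h₁s h₂s h₁s' h₂s' : ℝ → ℝ)
    (hstar : Admissible x₁ x₂ h₁s h₂s h₁s' h₂s')
    (hmax : ∀ h₁ h₂ h₁' h₂' : ℝ → ℝ, Admissible x₁ x₂ h₁ h₂ h₁' h₂' →
      Gfun F x₂ h₁ h₂ h₁' h₂' ≤ Gfun F x₂ h₁s h₂s h₁s' h₂s')
    (μs : Measure (ℝ × ℝ)) (hμs : IsDoublyStochastic μs)
    (hμsdf : HasPiecewiseDF x₁ x₂ h₁s h₂s μs) :
    (∀ h₁ h₂ h₁' h₂' : ℝ → ℝ, Admissible x₁ x₂ h₁ h₂ h₁' h₂' →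
      ∀ μ : Measure (ℝ × ℝ), IsDoublyStochastic μ → HasPiecewiseDF x₁ x₂ h₁ h₂ μ →
        ∫ p, F p ∂μ ≤ ∫ p, F p ∂μs) ∧
    ∫ p, F p ∂μs = Gfun F x₂ h₁s h₂s h₁s' h₂s' :=
  stmt8_general x₁ x₂ F hFcont h₁s h₂s h₁s' h₂s' hstar hmax μs hμs hμsdf
end
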